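/- Fix integers k ≥ 0 and n ≥ k+4, and let E be the set of 2-element subsets of [n]. Define the following subspaces of ℝ^E: V_{1,e} = ℝ·v_e for each 2-subset e of [k]; V_{1,j}' = ℝ·(Σ_{i=k+1}^n v_{{j,i}}) for each j ∈ [k]; V_{1}'' = ℝ·(Σ_{k+1≤i<j≤n} v_{{i,j}}); for j ∈ [k], V_{2,j} = {Σ_{i=k+1}^n c_i v_{{j,i}} : c ∈ ℝ^n, c_i = 0 for i ∈ [k], Σ_i c_i = 0}; V_{2,k+1} = {Σ_{k+1≤i<j≤n} (c_i + c_j) v_{{i,j}} : c ∈ ℝ^n, c_i = 0 for i ∈ [k], Σ_i c_i = 0}; and V_{3,1} = {Σ_{k+1≤i<j≤n} λ_{{i,j}} v_{{i,j}} : for every m ∈ {k+1,...,n}, Σ_{e : m ∈ e} λ_e = 0}. Then these C(k,2)+k+1+(k+1)+1 subspaces are pairwise orthogonal with respect to the standard inner product, each is invariant under the action of S_{n−k} on ℝ^E, their direct sum is all of ℝ^E, and their dimensions are: dim V_{1,e} = dim V_{1,j}' = dim V_1'' = 1, dim V_{2,j} = n−k−1 for each j ∈ [k+1], and dim V_{3,1}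 = C(n−k,2) − (n−k). -/

import Mathlib

open Finset

/-- The 2-element subsets ("edges") of `[n] = {1,…,n}`, modeled inside `ℕ`. -/
def edgesN (n : ℕ) : Finset (Finset ℕ) := (Finset.Icc 1 n).powersetCard 2

/-- `σ` belongs to the subgroup `S_{n-k} ≤ S_n` (inside `Perm ℕ`): it fixes every
element of `[k]` pointwise and every element outside `[n]`. -/
def FixPerm (n k : ℕ) (σ : Equiv.Perm ℕ) : Prop :=
  (∀ i ∈ Finset.Icc 1 k, σ i = i) ∧ (∀ i, i ∉ Finset.Icc 1 n → σ i = i)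

/-- The action of a permutation of `[n]` on an edge (2-subset) of `[n]`. -/
def permEdge (n : ℕ) (σ : Equiv.Perm ℕ) (g : ↥(edgesN n)) : ↥(edgesN n) :=
  if h : g.1.image σ ∈ edgesN n then ⟨g.1.image σ, h⟩ else g

/-- The standard basis vector `v_e` of `ℝ^{edgesN n}` (extended by `e : Finset ℕ`). -/
def vN (n : ℕ) (e : Finset ℕ) : ↥(edgesN n) → ℝ := fun g => if g.1 = e then 1 else 0

/-- `Σ_{i=k+1}^n v_{{j,i}}`. -/
noncomputable def rowSumVec (n k j : ℕ) : ↥(edgesN n) → ℝ :=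
  ∑ i ∈ Finset.Icc (k+1) n, vN n {j, i}

/-- `Σ_{k+1 ≤ i < j ≤ n} v_{{i,j}}`. -/
noncomputable def outerVec (n k : ℕ) : ↥(edgesN n) → ℝ :=
  ∑ e ∈ (Finset.Icc (k+1) n).powersetCard 2, vN n e

/-- The coefficient space `{c ∈ ℝ^n : c_i = 0 for i ∈ [k], Σ_i c_i = 0}`. -/
def Csub (n k : ℕ) : Submodule ℝ (ℕ → ℝ) where
  carrier := {c | (∀ i ∈ Finset.Icc 1 k, c i = 0) ∧ ∑ i ∈ Finset.Icc 1 n, c i = 0}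
  add_mem' := by
    rintro a b ⟨ha1, ha2⟩ ⟨hb1, hb2⟩
    exact ⟨fun i hi => by simp [ha1 i hi, hb1 i hi],
      by simp [Finset.sum_add_distrib, ha2, hb2]⟩
  zero_mem' := ⟨fun _ _ => rfl, by simp⟩
  smul_mem' := by
    rintro r a ⟨ha1, ha2⟩
    exact ⟨fun i hi => by simp [ha1 i hi],
      by simp only [Pi.smul_apply, smul_eq_mul, ← Finset.mul_sum, ha2, mul_zero]⟩

/-- The linear map `c ↦ Σ_{i=k+1}^n c_i • v_{{j,i}}`, whose image of `Csub` is `V_{2,j}`. -/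
noncomputable def Phi2 (n k j : ℕ) : (ℕ → ℝ) →ₗ[ℝ] (↥(edgesN n) → ℝ) where
  toFun c := ∑ i ∈ Finset.Icc (k+1) n, c i • vN n {j, i}
  map_add' a b := by
    simp [add_smul, Finset.sum_add_distrib]
  map_smul' r a := by
    simp only [Pi.smul_apply, smul_eq_mul, RingHom.id_apply, mul_smul]
    rw [Finset.smul_sum]

/-- The linear map `c ↦ Σ_{k+1≤i<j≤n} (c_i + c_j) • v_{{i,j}}`, whose image of `Csub`
is `V_{2,k+1}`. -/
noncomputable def Phi2' (n k : ℕ) : (ℕ → ℝ) →ₗ[ℝ] (↥(edgesN n) → ℝ) where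
  toFun c := ∑ e ∈ (Finset.Icc (k+1) n).powersetCard 2, (∑ i ∈ e, c i) • vN n e
  map_add' a b := by
    simp [Finset.sum_add_distrib, add_smul]
  map_smul' r a := by
    simp only [Pi.smul_apply, smul_eq_mul, RingHom.id_apply, ← Finset.mul_sum, mul_smul]
    rw [Finset.smul_sum]

/-- The subspace `V_{3,1}`: vectors supported on the edges inside `{k+1,…,n}` such that
for every `m ∈ {k+1,…,n}` the entries over the edges containing `m` sum to zero. -/
def V3sub (n k : ℕ) : Submodule ℝ (↥(edgesN n) → ℝ) where
  carrier := {w | (∀ g : ↥(edgesN n), ¬ g.1 ⊆ Finset.Icc (k+1) n → w g = 0) ∧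
      ∀ m ∈ Finset.Icc (k+1) n,
        ∑ g ∈ Finset.univ.filter (fun g : ↥(edgesN n) => m ∈ g.1), w g = 0}
  add_mem' := by
    rintro a b ⟨ha1, ha2⟩ ⟨hb1, hb2⟩
    exact ⟨fun g hg => by simp [ha1 g hg, hb1 g hg],
      fun m hm => by
        simp only [Pi.add_apply, Finset.sum_add_distrib, ha2 m hm, hb2 m hm, add_zero]⟩
  zero_mem' := ⟨fun _ _ => rfl, fun m hm => by simp⟩
  smul_mem' := by
    rintro r a ⟨ha1, ha2⟩
    exact ⟨fun g hg => by simp [ha1 g hg],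
      fun m hm => by simp only [Pi.smul_apply, smul_eq_mul, ← Finset.mul_sum, ha2 m hm,
        mul_zero]⟩

/-- Index type for the `C(k,2) + k + 1 + (k+1) + 1` subspaces. -/
abbrev DecompIdx (k : ℕ) :=
  ↥(edgesN k) ⊕ (↥(Finset.Icc 1 k) ⊕ (Unit ⊕ (↥(Finset.Icc 1 k) ⊕ (Unit ⊕ Unit))))

/-- The family of subspaces `V_{1,e}, V_{1,j}', V_1'', V_{2,j}, V_{2,k+1}, V_{3,1}`. -/
noncomputable def Vfam (n k : ℕ) : DecompIdx k → Submodule ℝ (↥(edgesN n) → ℝ)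
  | .inl e => Submodule.span ℝ {vN n e.1}
  | .inr (.inl j) => Submodule.span ℝ {rowSumVec n k j.1}
  | .inr (.inr (.inl _)) => Submodule.span ℝ {outerVec n k}
  | .inr (.inr (.inr (.inl j))) => Submodule.map (Phi2 n k j.1) (Csub n k)
  | .inr (.inr (.inr (.inr (.inl _)))) => Submodule.map (Phi2' n k) (Csub n k)
  | .inr (.inr (.inr (.inr (.inr _)))) => V3sub n k


open Module

/-!
Every subspace lives on one block of edges: a single edge inside `[k]`, the star
`{{j, i} : i > k}` of a vertex `j ∈ [k]`, or the edges inside `I = {k+1, …, n}`. Subspaces on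
different blocks are orthogonal. On a common block orthogonality comes from `Σ_{i ∈ I} c_i = 0`
and from the vanishing vertex sums defining `V_{3,1}`, because
`⟨Σ_{e ⊆ I} (c_a + c_b) v_e, w⟩ = Σ_{m ∈ I} c_m · (Σ_{e ∋ m} w_e)` for `w` supported inside `I`.

The maps `c ↦ Σ_i c_i v_{j,i}` and `c ↦ Σ_{e ⊆ I} (c_a + c_b) v_e` only see `c` on `I` and are
injective there (the second because `|I| ≥ 3`), so `dim V_{2,•} = n − k − 1`, while `V_{3,1}`
is cut out of the `C(n−k, 2)` edges inside `I` by `n − k` vertex-sum conditions. Orthogonal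
subspaces are independent, so the dimensions add up to at most
`C(n, 2) = C(k, 2) + k(n−k) + C(n−k, 2)`; this forces `dim V_{3,1} = C(n−k, 2) − (n−k)` and
`⨁ V = ℝ^E`.
-/

section General

theorem Equiv.Perm.apply_mem_iff_of_forall_notMem {α : Type*} {σ : Equiv.Perm α} {s : Set α}
    (h : ∀ x ∉ s, σ x = x) (x : α) : σ x ∈ s ↔ x ∈ s := by
  by_cases hx : x ∈ s
  · refine iff_of_true ?_ hx
    by_contra hσx
    exact hσx (by rwa [σ.injective (h _ hσx)])
  · rw [h x hx]

theorem eq_zero_of_add_eq_zero_of_three_le_card {α R : Type*} [Field R] [LinearOrder R]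
    [IsStrictOrderedRing R] {s : Finset α} (hs : 3 ≤ #s) {x : α → R}
    (h : ∀ p ∈ s, ∀ q ∈ s, p ≠ q → x p + x q = 0) : ∀ p ∈ s, x p = 0 := by
  classical
  intro p hp
  obtain ⟨a, ha, b, hb, hab⟩ := one_lt_card.1 (by rw [card_erase_of_mem hp]; omega :
    1 < #(s.erase p))
  rw [mem_erase] at ha hb
  linarith [h p hp a ha.2 (Ne.symm ha.1), h p hp b hb.2 (Ne.symm hb.1), h a ha.2 b hb.2 hab]

theorem iSupIndep_of_pairwise_dotProduct_eq_zero {ι σ R : Type*} [Fintype σ] [Field R]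
    [LinearOrder R] [IsStrictOrderedRing R] {p : ι → Submodule R (σ → R)}
    (h : Pairwise fun i j => ∀ v ∈ p i, ∀ w ∈ p j, v ⬝ᵥ w = 0) : iSupIndep p := by
  classical
  rw [iSupIndep_iff_finsetSum_eq_zero_imp_eq_zero]
  intro s v hv hsum i hi
  refine dotProduct_self_eq_zero.mp ?_
  calc v i ⬝ᵥ v i = v i ⬝ᵥ ∑ j ∈ s, v j := by
        rw [dotProduct_sum, sum_eq_single_of_mem i hi fun j hj hji =>
          h hji.symm _ (hv i hi) _ (hv j hj)]
    _ = 0 := by rw [hsum, dotProduct_zero]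

theorem finrank_iSup_eq_sum_of_iSupIndep {ι K V : Type*} [Fintype ι] [DivisionRing K]
    [AddCommGroup V] [Module K V] [FiniteDimensional K V] {p : ι → Submodule K V}
    (h : iSupIndep p) : finrank K ↥(⨆ i, p i) = ∑ i, finrank K (p i) := by
  classical
  rw [← DirectSum.range_coeLinearMap, ← finrank_directSum]
  exact LinearMap.finrank_range_of_inj h.dfinsupp_lsum_injective

theorem finrank_map_eq_of_ker_eq {K M N N' : Type*} [DivisionRing K] [AddCommGroup M]
    [Module K M] [AddCommGroup N] [Module K N] [AddCommGroup N'] [Module K N']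
    {f : M →ₗ[K] N} {f' : M →ₗ[K] N'} (h : LinearMap.ker f = LinearMap.ker f')
    (p : Submodule K M) : finrank K (p.map f) = finrank K (p.map f') := by
  rw [← LinearMap.range_domRestrict, ← LinearMap.range_domRestrict]
  have hker : LinearMap.ker (f.domRestrict p) = LinearMap.ker (f'.domRestrict p) := by
    rw [LinearMap.ker_domRestrict, LinearMap.ker_domRestrict, h]
  exact ((f.domRestrict p).quotKerEquivRange.symm.trans
    ((Submodule.quotEquivOfEq _ _ hker).trans (f'.domRestrict p).quotKerEquivRange)).finrank_eq

theorem dotProduct_eq_zero_of_fiber_ne {σ β R : Type*} [Fintype σ] [NonUnitalNonAssocSemiring R]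
    {τ : σ → β} {a b : β} {v w : σ → R} (hv : ∀ x, τ x ≠ a → v x = 0)
    (hw : ∀ x, τ x ≠ b → w x = 0) (hab : a ≠ b) : v ⬝ᵥ w = 0 :=
  sum_eq_zero fun x _ => by
    by_cases hx : τ x = a
    · rw [hw x (hx ▸ hab), mul_zero]
    · rw [hv x hx, zero_mul]

theorem Nat.add_choose_two (a b : ℕ) :
    (a + b).choose 2 = a.choose 2 + a * b + b.choose 2 := by
  induction b with
  | zero => simp
  | succ b ih =>
    rw [← add_assoc, Nat.choose_succ_succ', ih, Nat.choose_succ_succ', Nat.choose_one_right,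
      Nat.choose_one_right]
    ring

end General

section Edges

variable {n : ℕ}

theorem mem_edgesN {e : Finset ℕ} : e ∈ edgesN n ↔ e ⊆ Icc 1 n ∧ #e = 2 := mem_powersetCard

theorem pair_mem_edgesN {a b : ℕ} (ha : a ∈ Icc 1 n) (hb : b ∈ Icc 1 n) (hab : a ≠ b) :
    {a, b} ∈ edgesN n :=
  mem_edgesN.2 ⟨insert_subset ha (singleton_subset_iff.2 hb), card_pair hab⟩

theorem card_edgesN : Fintype.card (edgesN n) = n.choose 2 := by
  rw [edgesN, Fintype.card_coe, card_powersetCard, Nat.card_Icc, Nat.add_sub_cancel]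

theorem card_edgesN_subset {s : Finset ℕ} (hs : s ⊆ Icc 1 n) :
    Fintype.card {g : edgesN n // g.1 ⊆ s} = (#s).choose 2 := by
  rw [← card_powersetCard, ← Fintype.card_coe]
  refine Fintype.card_congr
    { toFun g := ⟨g.1.1, mem_powersetCard.2 ⟨g.2, (mem_edgesN.1 g.1.2).2⟩⟩
      invFun e := ⟨⟨e.1, mem_edgesN.2 ⟨(mem_powersetCard.1 e.2).1.trans hs,
        (mem_powersetCard.1 e.2).2⟩⟩, (mem_powersetCard.1 e.2).1⟩
      left_inv _ := rfl
      right_inv _ := rfl }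

theorem vN_eq_single {e : Finset ℕ} (he : e ∈ edgesN n) : vN n e = Pi.single ⟨e, he⟩ 1 := by
  ext g
  simp [vN, Pi.single_apply, Subtype.ext_iff]

theorem vN_dotProduct {e : Finset ℕ} (he : e ∈ edgesN n) (w : edgesN n → ℝ) :
    vN n e ⬝ᵥ w = w ⟨e, he⟩ := by
  rw [vN_eq_single he, single_dotProduct, one_mul]

theorem vN_ne_zero {e : Finset ℕ} (he : e ∈ edgesN n) : vN n e ≠ 0 := by
  rw [vN_eq_single he]
  exact Pi.single_ne_zero_iff.2 one_ne_zero

end Edges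

section Coefficients

variable {n k : ℕ}

def restrictOuter (n k : ℕ) : (ℕ → ℝ) →ₗ[ℝ] (Icc (k + 1) n → ℝ) :=
  LinearMap.funLeft ℝ ℝ Subtype.val

theorem mem_ker_restrictOuter {c : ℕ → ℝ} :
    c ∈ LinearMap.ker (restrictOuter n k) ↔ ∀ i ∈ Icc (k + 1) n, c i = 0 := by
  simp [restrictOuter, funext_iff, LinearMap.funLeft_apply]

theorem sum_Icc_eq_zero_of_mem_Csub {c : ℕ → ℝ} (hc : c ∈ Csub n k) :
    ∑ i ∈ Icc (k + 1) n, c i = 0 := by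
  rw [← hc.2]
  refine sum_subset (Icc_subset_Icc_left (by omega)) fun i hi hiI => hc.1 i ?_
  simp only [mem_Icc] at hi hiI ⊢
  omega

theorem map_restrictOuter_Csub :
    (Csub n k).map (restrictOuter n k) = LinearMap.ker (∑ i, LinearMap.proj i) := by
  ext x
  simp only [Submodule.mem_map, LinearMap.mem_ker, LinearMap.sum_apply, LinearMap.proj_apply]
  constructor
  · rintro ⟨c, hc, rfl⟩
    exact (sum_coe_sort (Icc (k + 1) n) c).trans (sum_Icc_eq_zero_of_mem_Csub hc)
  · intro hx
    refine ⟨fun i => if h : i ∈ Icc (k + 1) n then x ⟨i, h⟩ else 0, ⟨fun i hi => ?_, ?_⟩, ?_⟩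
    · refine dif_neg ?_
      simp only [mem_Icc] at hi ⊢
      omega
    · rw [← sum_subset (Icc_subset_Icc_left (by omega)) fun i _ hi => dif_neg hi,
        ← sum_coe_sort, ← hx]
      exact sum_congr rfl fun i _ => dif_pos i.2
    · ext i
      exact dif_pos i.2

theorem finrank_map_restrictOuter_Csub (h : k < n) :
    finrank ℝ ((Csub n k).map (restrictOuter n k)) = n - k - 1 := by
  have hI : k + 1 ∈ Icc (k + 1) n := mem_Icc.2 ⟨le_rfl, h⟩
  have hne : (∑ i, LinearMap.proj i : (Icc (k + 1) n → ℝ) →ₗ[ℝ] ℝ) ≠ 0 := fun h0 => by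
    simpa using LinearMap.congr_fun h0 (Pi.single ⟨k + 1, hI⟩ 1)
  have := Module.Dual.finrank_ker_add_one_of_ne_zero hne
  rw [finrank_fintype_fun_eq_card, Fintype.card_coe, Nat.card_Icc] at this
  rw [map_restrictOuter_Csub]
  omega

end Coefficients

section Phi2

variable {n k j : ℕ}

theorem star_mem_edgesN {i : ℕ} (hj : j ∈ Icc 1 k) (hi : i ∈ Icc (k + 1) n) :
    {j, i} ∈ edgesN n := by
  simp only [mem_Icc] at hj hi
  exact pair_mem_edgesN (mem_Icc.2 ⟨by omega, by omega⟩) (mem_Icc.2 ⟨by omega, by omega⟩)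
    (by omega)

theorem Phi2_eq_sum (c : ℕ → ℝ) :
    Phi2 n k j c = ∑ i ∈ Icc (k + 1) n, c i • vN n {j, i} := rfl

theorem Phi2_apply (c : ℕ → ℝ) (g : edgesN n) :
    Phi2 n k j c g = ∑ i ∈ Icc (k + 1) n, if g.1 = {j, i} then c i else 0 := by
  simp [Phi2, vN]

theorem Phi2_apply_star {i : ℕ} (hj : j ∈ Icc 1 k) (hi : i ∈ Icc (k + 1) n) (c : ℕ → ℝ) :
    Phi2 n k j c ⟨{j, i}, star_mem_edgesN hj hi⟩ = c i := by
  rw [Phi2_apply, sum_eq_single_of_mem i hi fun i' hi' hne => if_neg ?_, if_pos rfl]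
  simp only [mem_Icc] at hj hi hi'
  intro h
  have : i ∈ ({j, i'} : Finset ℕ) := h ▸ mem_insert_of_mem (mem_singleton_self i)
  simp only [mem_insert, mem_singleton] at this
  omega

theorem rowSumVec_eq_Phi2 : rowSumVec n k j = Phi2 n k j 1 := by
  simp [rowSumVec, Phi2]

theorem ker_Phi2 (hj : j ∈ Icc 1 k) :
    LinearMap.ker (Phi2 n k j) = LinearMap.ker (restrictOuter n k) := by
  ext c
  rw [mem_ker_restrictOuter, LinearMap.mem_ker]
  refine ⟨fun h i hi => ?_, fun h => ?_⟩
  · rw [← Phi2_apply_star hj hi c, h, Pi.zero_apply]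
  · rw [Phi2_eq_sum]
    exact sum_eq_zero fun i hi => by rw [h i hi, zero_smul]

theorem Phi2_dotProduct_Phi2 (hj : j ∈ Icc 1 k) (c d : ℕ → ℝ) :
    Phi2 n k j c ⬝ᵥ Phi2 n k j d = ∑ i ∈ Icc (k + 1) n, c i * d i := by
  rw [Phi2_eq_sum, sum_dotProduct]
  refine sum_congr rfl fun i hi => ?_
  rw [smul_dotProduct, vN_dotProduct (star_mem_edgesN hj hi), Phi2_apply_star hj hi,
    smul_eq_mul]

end Phi2

section Phi2'

variable {n k : ℕ}

theorem Phi2'_apply (c : ℕ → ℝ) (g : edgesN n) :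
    Phi2' n k c g = if g.1 ⊆ Icc (k + 1) n then ∑ i ∈ g.1, c i else 0 := by
  simp only [Phi2', LinearMap.coe_mk, AddHom.coe_mk, Finset.sum_apply, Pi.smul_apply, vN,
    smul_eq_mul, mul_ite, mul_one, mul_zero, sum_ite_eq, mem_powersetCard, (mem_edgesN.1 g.2).2,
    and_true]

theorem Phi2'_apply_pair {p q : ℕ} (hp : p ∈ Icc (k + 1) n) (hq : q ∈ Icc (k + 1) n)
    (hpq : p ≠ q) (c : ℕ → ℝ) :
    Phi2' n k c ⟨{p, q}, pair_mem_edgesN (Icc_subset_Icc_left (by omega) hp)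
      (Icc_subset_Icc_left (by omega) hq) hpq⟩ = c p + c q := by
  rw [Phi2'_apply, if_pos (insert_subset hp (singleton_subset_iff.2 hq)), sum_pair hpq]

theorem Phi2'_apply_eq_zero {c : ℕ → ℝ} {g : edgesN n} (hg : ¬ g.1 ⊆ Icc (k + 1) n) :
    Phi2' n k c g = 0 := by
  rw [Phi2'_apply, if_neg hg]

theorem outerVec_eq_Phi2' : outerVec n k = Phi2' n k (fun _ => 1 / 2) := by
  refine sum_congr rfl fun e he => ?_
  rw [sum_const, (mem_powersetCard.1 he).2]
  norm_num

theorem ker_Phi2' (h : k + 3 ≤ n) :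
    LinearMap.ker (Phi2' n k) = LinearMap.ker (restrictOuter n k) := by
  ext c
  rw [mem_ker_restrictOuter, LinearMap.mem_ker]
  refine ⟨fun h0 => eq_zero_of_add_eq_zero_of_three_le_card (by rw [Nat.card_Icc]; omega)
    fun p hp q hq hpq => ?_, fun h0 => funext fun g => ?_⟩
  · rw [← Phi2'_apply_pair hp hq hpq, h0, Pi.zero_apply]
  · rw [Phi2'_apply]
    split_ifs with hg
    · exact sum_eq_zero fun i hi => h0 i (hg hi)
    · rfl

end Phi2'

section VertexSum

variable {n k m : ℕ}

noncomputable def vertexSum (n m : ℕ) : (edgesN n → ℝ) →ₗ[ℝ] ℝ where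
  toFun w := ∑ g ∈ univ.filter (fun g : edgesN n => m ∈ g.1), w g
  map_add' _ _ := sum_add_distrib
  map_smul' _ _ := by simp [mul_sum]

theorem vertexSum_apply (w : edgesN n → ℝ) :
    vertexSum n m w = ∑ g ∈ univ.filter (fun g : edgesN n => m ∈ g.1), w g := rfl

theorem mem_V3sub {w : edgesN n → ℝ} : w ∈ V3sub n k ↔
    (∀ g : edgesN n, ¬ g.1 ⊆ Icc (k + 1) n → w g = 0) ∧
      ∀ m ∈ Icc (k + 1) n, vertexSum n m w = 0 := Iff.rfl

theorem vertexSum_vN {e : Finset ℕ} (he : e ∈ edgesN n) :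
    vertexSum n m (vN n e) = if m ∈ e then 1 else 0 := by
  simp [vertexSum, vN_eq_single he, sum_pi_single']

theorem vertexSum_outerVec (hm : m ∈ Icc (k + 1) n) :
    vertexSum n m (outerVec n k) = ((n - k - 1 : ℕ) : ℝ) := by
  have hsub : Icc (k + 1) n ⊆ Icc 1 n := Icc_subset_Icc_left (by omega)
  rw [outerVec, map_sum, sum_congr rfl fun e he => vertexSum_vN
    (mem_edgesN.2 ⟨(mem_powersetCard.1 he).1.trans hsub, (mem_powersetCard.1 he).2⟩),
    sum_boole]
  have := card_filter_powersetCard_subset {m} (Icc (k + 1) n) 2 (singleton_subset_iff.2 hm)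
    (by simp)
  simp only [singleton_subset_iff, card_singleton, Nat.card_Icc, Nat.reduceSub,
    Nat.choose_one_right] at this
  rw [this]
  congr 1
  omega

theorem Phi2'_dotProduct_eq_sum_vertexSum {w : edgesN n → ℝ}
    (hw : ∀ g : edgesN n, ¬ g.1 ⊆ Icc (k + 1) n → w g = 0)
    (c : ℕ → ℝ) : Phi2' n k c ⬝ᵥ w = ∑ m ∈ Icc (k + 1) n, c m * vertexSum n m w := by
  have key : ∀ g : edgesN n,
      Phi2' n k c g * w g = ∑ m ∈ Icc (k + 1) n, if m ∈ g.1 then c m * w g else 0 := by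
    intro g
    by_cases hg : g.1 ⊆ Icc (k + 1) n
    · rw [Phi2'_apply, if_pos hg, sum_mul, sum_ite_mem, inter_eq_right.2 hg]
    · simp [hw g hg]
  rw [dotProduct, sum_congr rfl fun g _ => key g, sum_comm]
  refine sum_congr rfl fun m _ => ?_
  rw [vertexSum_apply, mul_sum, sum_filter]

end VertexSum

section Orthogonality

variable {n k : ℕ}

-- An edge inside `[k]` is its own block; any other edge is labelled by its endpoint in `[k]`,
-- or by `⊤` if it has none.
def edgeBlock (k : ℕ) (e : Finset ℕ) : Finset ℕ ⊕ WithTop ℕ :=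
  if e ⊆ Icc 1 k then .inl e else .inr (e.filter (· ≤ k)).min

def blockOf (k : ℕ) : DecompIdx k → Finset ℕ ⊕ WithTop ℕ
  | .inl e => .inl e.1
  | .inr (.inl j) => .inr j.1
  | .inr (.inr (.inl _)) => .inr ⊤
  | .inr (.inr (.inr (.inl j))) => .inr j.1
  | .inr (.inr (.inr (.inr _))) => .inr ⊤

theorem edgeBlock_star {i j : ℕ} (hj : j ∈ Icc 1 k) (hi : i ∈ Icc (k + 1) n) :
    edgeBlock k {j, i} = .inr j := by
  simp only [mem_Icc] at hj hi
  have hnot : ¬ {j, i} ⊆ Icc 1 k := fun h => by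
    have := h (mem_insert_of_mem (mem_singleton_self i))
    simp only [mem_Icc] at this
    omega
  have hfilter : ({j, i} : Finset ℕ).filter (· ≤ k) = {j} := by
    ext x
    simp only [mem_filter, mem_insert, mem_singleton]
    omega
  rw [edgeBlock, if_neg hnot, hfilter, min_singleton]
  rfl

theorem edgeBlock_of_subset_Icc {e : Finset ℕ} (hne : e.Nonempty) (he : e ⊆ Icc (k + 1) n) :
    edgeBlock k e = .inr ⊤ := by
  obtain ⟨x, hx⟩ := hne
  have hnot : ¬ e ⊆ Icc 1 k := fun h => by
    have h1 := h hx
    have h2 := he hx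
    simp only [mem_Icc] at h1 h2
    omega
  have hfilter : e.filter (· ≤ k) = ∅ := filter_false_of_mem fun y hy => by
    have := he hy
    simp only [mem_Icc] at this
    omega
  rw [edgeBlock, if_neg hnot, hfilter, min_empty]

theorem not_subset_Icc_of_edgeBlock_ne {g : edgesN n} (hg : edgeBlock k g.1 ≠ .inr ⊤) :
    ¬ g.1 ⊆ Icc (k + 1) n := fun h =>
  hg (edgeBlock_of_subset_Icc (card_pos.1 (by rw [(mem_edgesN.1 g.2).2]; omega)) h)

theorem Vfam_supported (i : DecompIdx k) {v : edgesN n → ℝ} (hv : v ∈ Vfam n k i) (g : edgesN n)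
    (hg : edgeBlock k g.1 ≠ blockOf k i) : v g = 0 := by
  have hstar {j : ℕ} (hj : j ∈ Icc 1 k) (hg : edgeBlock k g.1 ≠ .inr j) (c : ℕ → ℝ) :
      Phi2 n k j c g = 0 := by
    rw [Phi2_apply]
    exact sum_eq_zero fun i hi => if_neg fun h => hg (by rw [h]; exact edgeBlock_star hj hi)
  rcases i with e | j | _ | j | _ | _
  · obtain ⟨a, rfl⟩ := Submodule.mem_span_singleton.1 hv
    have : g.1 ≠ e.1 := fun h => hg (by rw [h, edgeBlock, if_pos (mem_edgesN.1 e.2).1]; rfl)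
    simp [vN, this]
  · obtain ⟨a, rfl⟩ := Submodule.mem_span_singleton.1 hv
    rw [Pi.smul_apply, rowSumVec_eq_Phi2, hstar j.2 hg, smul_zero]
  · obtain ⟨a, rfl⟩ := Submodule.mem_span_singleton.1 hv
    rw [Pi.smul_apply, outerVec_eq_Phi2', Phi2'_apply_eq_zero (not_subset_Icc_of_edgeBlock_ne hg),
      smul_zero]
  · obtain ⟨c, -, rfl⟩ := hv
    exact hstar j.2 hg c
  · obtain ⟨c, -, rfl⟩ := hv
    exact Phi2'_apply_eq_zero (not_subset_Icc_of_edgeBlock_ne hg)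
  · exact hv.1 g (not_subset_Icc_of_edgeBlock_ne hg)

theorem rowSumVec_dotProduct_Phi2 {j : ℕ} (hj : j ∈ Icc 1 k) {d : ℕ → ℝ} (hd : d ∈ Csub n k) :
    rowSumVec n k j ⬝ᵥ Phi2 n k j d = 0 := by
  rw [rowSumVec_eq_Phi2, Phi2_dotProduct_Phi2 hj]
  simpa using sum_Icc_eq_zero_of_mem_Csub hd

theorem Phi2'_dotProduct_eq_zero_of_mem_V3sub {w : edgesN n → ℝ} (hw : w ∈ V3sub n k)
    (c : ℕ → ℝ) : Phi2' n k c ⬝ᵥ w = 0 := by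
  rw [Phi2'_dotProduct_eq_sum_vertexSum (mem_V3sub.1 hw).1]
  exact sum_eq_zero fun m hm => by rw [(mem_V3sub.1 hw).2 m hm, mul_zero]

theorem Phi2'_dotProduct_outerVec {d : ℕ → ℝ} (hd : d ∈ Csub n k) :
    Phi2' n k d ⬝ᵥ outerVec n k = 0 := by
  rw [Phi2'_dotProduct_eq_sum_vertexSum fun g hg => by
      rw [outerVec_eq_Phi2', Phi2'_apply_eq_zero hg],
    sum_congr rfl fun m hm => by rw [vertexSum_outerVec hm], ← sum_mul,
    sum_Icc_eq_zero_of_mem_Csub hd, zero_mul]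

theorem Vfam_orthogonal {i j : DecompIdx k} (hij : i ≠ j) {v w : edgesN n → ℝ}
    (hv : v ∈ Vfam n k i) (hw : w ∈ Vfam n k j) : v ⬝ᵥ w = 0 := by
  by_cases hb : blockOf k i = blockOf k j
  swap
  · exact dotProduct_eq_zero_of_fiber_ne (Vfam_supported i hv) (Vfam_supported j hw) hb
  rcases i with e | a | ⟨⟩ | a | ⟨⟩ | ⟨⟩ <;> rcases j with e' | b | ⟨⟩ | b | ⟨⟩ | ⟨⟩ <;>
    simp only [blockOf, reduceCtorEq, Sum.inl.injEq, Sum.inr.injEq, WithTop.top_ne_natCast,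
      WithTop.natCast_ne_top, Nat.cast_inj, SetLike.coe_eq_coe] at hb <;>
    try subst hb
  all_goals first | exact absurd rfl hij | skip
  · obtain ⟨r, rfl⟩ := Submodule.mem_span_singleton.1 hv
    obtain ⟨d, hd, rfl⟩ := hw
    rw [smul_dotProduct, rowSumVec_dotProduct_Phi2 a.2 hd, smul_zero]
  · obtain ⟨r, rfl⟩ := Submodule.mem_span_singleton.1 hv
    obtain ⟨d, hd, rfl⟩ := hw
    rw [smul_dotProduct, dotProduct_comm, Phi2'_dotProduct_outerVec hd, smul_zero]
  · obtain ⟨r, rfl⟩ := Submodule.mem_span_singleton.1 hv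
    rw [smul_dotProduct, outerVec_eq_Phi2', Phi2'_dotProduct_eq_zero_of_mem_V3sub hw, smul_zero]
  · obtain ⟨d, hd, rfl⟩ := hv
    obtain ⟨r, rfl⟩ := Submodule.mem_span_singleton.1 hw
    rw [dotProduct_smul, dotProduct_comm, rowSumVec_dotProduct_Phi2 a.2 hd, smul_zero]
  · obtain ⟨d, hd, rfl⟩ := hv
    obtain ⟨r, rfl⟩ := Submodule.mem_span_singleton.1 hw
    rw [dotProduct_smul, Phi2'_dotProduct_outerVec hd, smul_zero]
  · obtain ⟨d, -, rfl⟩ := hv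
    exact Phi2'_dotProduct_eq_zero_of_mem_V3sub hw d
  · obtain ⟨r, rfl⟩ := Submodule.mem_span_singleton.1 hw
    rw [dotProduct_smul, dotProduct_comm, outerVec_eq_Phi2',
      Phi2'_dotProduct_eq_zero_of_mem_V3sub hv, smul_zero]
  · obtain ⟨d, -, rfl⟩ := hw
    rw [dotProduct_comm, Phi2'_dotProduct_eq_zero_of_mem_V3sub hv]

end Orthogonality

section Invariance

variable {n k : ℕ} {σ : Equiv.Perm ℕ}

theorem comp_mem_span_singleton {α : Type*} {x w : α → ℝ} {π : α → α}
    (hx : (fun a => x (π a)) = x) (hw : w ∈ Submodule.span ℝ {x}) :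
    (fun a => w (π a)) ∈ Submodule.span ℝ {x} := by
  obtain ⟨r, rfl⟩ := Submodule.mem_span_singleton.1 hw
  refine Submodule.mem_span_singleton.2 ⟨r, funext fun a => ?_⟩
  simp only [Pi.smul_apply, smul_eq_mul, congrFun hx a]

theorem FixPerm.apply_eq_of_notMem (hσ : FixPerm n k σ) {i : ℕ} (hi : i ∉ Icc (k + 1) n) :
    σ i = i := by
  by_cases hik : i ∈ Icc 1 k
  · exact hσ.1 i hik
  · refine hσ.2 i ?_
    simp only [mem_Icc] at hi hik ⊢
    omega

theorem FixPerm.apply_mem_Icc_iff (hσ : FixPerm n k σ) (i : ℕ) :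
    σ i ∈ Icc (k + 1) n ↔ i ∈ Icc (k + 1) n :=
  Equiv.Perm.apply_mem_iff_of_forall_notMem (s := ↑(Icc (k + 1) n))
    (fun _ hx => hσ.apply_eq_of_notMem hx) i

theorem FixPerm.sum_comp (hσ : FixPerm n k σ) (f : ℕ → ℝ) :
    ∑ i ∈ Icc (k + 1) n, f (σ i) = ∑ i ∈ Icc (k + 1) n, f i :=
  σ.sum_comp _ f fun _ hi => by_contra fun h => hi (hσ.apply_eq_of_notMem h)

theorem permEdge_val (hσ : FixPerm n k σ) (g : edgesN n) :
    (permEdge n σ g).1 = g.1.image σ := by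
  obtain ⟨hsub, hcard⟩ := mem_edgesN.1 g.2
  have hmem : g.1.image σ ∈ edgesN n := by
    refine mem_edgesN.2 ⟨image_subset_iff.2 fun x hx => ?_, by
      rw [card_image_of_injective _ σ.injective, hcard]⟩
    exact (Equiv.Perm.apply_mem_iff_of_forall_notMem (s := ↑(Icc 1 n)) hσ.2 x).2 (hsub hx)
  rw [permEdge, dif_pos hmem]

theorem permEdge_bijective (hσ : FixPerm n k σ) : Function.Bijective (permEdge n σ) :=
  Finite.injective_iff_bijective.1 fun g g' h => Subtype.ext <|
    image_injective σ.injective (by rw [← permEdge_val hσ, ← permEdge_val hσ, h])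

theorem comp_mem_Csub (hσ : FixPerm n k σ) {c : ℕ → ℝ} (hc : c ∈ Csub n k) :
    c ∘ σ ∈ Csub n k := by
  refine ⟨fun i hi => by rw [Function.comp_apply, hσ.1 i hi, hc.1 i hi], ?_⟩
  rw [← hc.2]
  exact σ.sum_comp _ c fun i hi => by_contra fun h => hi (hσ.2 i h)

theorem vN_comp_permEdge (hσ : FixPerm n k σ) {e : Finset ℕ} (he : e ⊆ Icc 1 k) :
    (fun g => vN n e (permEdge n σ g)) = vN n e := by
  have hfix : e.image σ = e := by
    conv_rhs => rw [← image_id (s := e)]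
    exact image_congr fun x hx => hσ.1 x (he hx)
  funext g
  refine if_congr ?_ rfl rfl
  rw [permEdge_val hσ, ← image_inj (s := g.1) (t := e) σ.injective, hfix]

theorem Phi2_comp_permEdge (hσ : FixPerm n k σ) {j : ℕ} (hj : j ∈ Icc 1 k) (c : ℕ → ℝ) :
    (fun g => Phi2 n k j c (permEdge n σ g)) = Phi2 n k j (c ∘ σ) := by
  funext g
  rw [Phi2_apply, Phi2_apply, permEdge_val hσ, ← hσ.sum_comp]
  refine sum_congr rfl fun i _ => if_congr ?_ rfl rfl
  rw [show ({j, σ i} : Finset ℕ) = ({j, i} : Finset ℕ).image σ by simp [hσ.1 j hj],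
    image_inj σ.injective]

theorem FixPerm.image_subset_Icc_iff (hσ : FixPerm n k σ) (s : Finset ℕ) :
    s.image σ ⊆ Icc (k + 1) n ↔ s ⊆ Icc (k + 1) n := by
  simp only [image_subset_iff, hσ.apply_mem_Icc_iff]
  rfl

theorem Phi2'_comp_permEdge (hσ : FixPerm n k σ) (c : ℕ → ℝ) :
    (fun g => Phi2' n k c (permEdge n σ g)) = Phi2' n k (c ∘ σ) := by
  funext g
  rw [Phi2'_apply, Phi2'_apply, permEdge_val hσ, sum_image fun x _ y _ h => σ.injective h]
  exact if_congr (hσ.image_subset_Icc_iff g.1) rfl rfl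

theorem vertexSum_comp_permEdge (hσ : FixPerm n k σ) (w : edgesN n → ℝ) (m : ℕ) :
    vertexSum n m (fun g => w (permEdge n σ g)) = vertexSum n (σ m) w := by
  simp only [vertexSum_apply, sum_filter]
  refine Fintype.sum_bijective _ (permEdge_bijective hσ) _ _ fun g => if_congr ?_ rfl rfl
  rw [permEdge_val hσ, σ.injective.mem_finset_image]

theorem comp_mem_V3sub (hσ : FixPerm n k σ) {w : edgesN n → ℝ} (hw : w ∈ V3sub n k) :
    (fun g => w (permEdge n σ g)) ∈ V3sub n k := by
  refine mem_V3sub.2 ⟨fun g hg => (mem_V3sub.1 hw).1 _ ?_, fun m hm => ?_⟩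
  · rwa [permEdge_val hσ, hσ.image_subset_Icc_iff]
  · rw [vertexSum_comp_permEdge hσ, (mem_V3sub.1 hw).2 _ ((hσ.apply_mem_Icc_iff m).2 hm)]

theorem Vfam_invariant (hσ : FixPerm n k σ) (i : DecompIdx k) {w : edgesN n → ℝ}
    (hw : w ∈ Vfam n k i) : (fun g => w (permEdge n σ g)) ∈ Vfam n k i := by
  rcases i with e | j | _ | j | _ | _
  · exact comp_mem_span_singleton (vN_comp_permEdge hσ (mem_edgesN.1 e.2).1) hw
  · refine comp_mem_span_singleton ?_ hw
    rw [rowSumVec_eq_Phi2, Phi2_comp_permEdge hσ j.2]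
    rfl
  · refine comp_mem_span_singleton ?_ hw
    rw [outerVec_eq_Phi2', Phi2'_comp_permEdge hσ]
    rfl
  · obtain ⟨c, hc, rfl⟩ := hw
    exact ⟨c ∘ σ, comp_mem_Csub hσ hc, (Phi2_comp_permEdge hσ j.2 c).symm⟩
  · obtain ⟨c, hc, rfl⟩ := hw
    exact ⟨c ∘ σ, comp_mem_Csub hσ hc, (Phi2'_comp_permEdge hσ c).symm⟩
  · exact comp_mem_V3sub hσ hw

end Invariance

section Dimension

variable {n k : ℕ}

theorem finrank_Vfam_inl (h : k ≤ n) (e : edgesN k) : finrank ℝ (Vfam n k (.inl e)) = 1 :=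
  finrank_span_singleton (vN_ne_zero (powersetCard_mono (Icc_subset_Icc_right h) e.2))

theorem finrank_Vfam_rowSumVec (h : k < n) (j : Icc 1 k) :
    finrank ℝ (Vfam n k (.inr (.inl j))) = 1 := by
  refine finrank_span_singleton fun h0 => ?_
  rw [rowSumVec_eq_Phi2, ← LinearMap.mem_ker, ker_Phi2 j.2, mem_ker_restrictOuter] at h0
  simpa using h0 (k + 1) (mem_Icc.2 ⟨le_rfl, by omega⟩)

theorem finrank_Vfam_outerVec (h : k + 3 ≤ n) (u : Unit) :
    finrank ℝ (Vfam n k (.inr (.inr (.inl u)))) = 1 := by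
  refine finrank_span_singleton fun h0 => ?_
  rw [outerVec_eq_Phi2', ← LinearMap.mem_ker, ker_Phi2' h, mem_ker_restrictOuter] at h0
  simpa using h0 (k + 1) (mem_Icc.2 ⟨le_rfl, by omega⟩)

theorem finrank_Vfam_Phi2 (h : k < n) (j : Icc 1 k) :
    finrank ℝ (Vfam n k (.inr (.inr (.inr (.inl j))))) = n - k - 1 := by
  rw [Vfam, finrank_map_eq_of_ker_eq (ker_Phi2 j.2), finrank_map_restrictOuter_Csub h]

theorem finrank_Vfam_Phi2' (h : k + 3 ≤ n) (u : Unit) :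
    finrank ℝ (Vfam n k (.inr (.inr (.inr (.inr (.inl u)))))) = n - k - 1 := by
  rw [Vfam, finrank_map_eq_of_ker_eq (ker_Phi2' h), finrank_map_restrictOuter_Csub (by omega)]

noncomputable def V3constraints (n k : ℕ) :
    (edgesN n → ℝ) →ₗ[ℝ] ({g : edgesN n // ¬ g.1 ⊆ Icc (k + 1) n} → ℝ) × (Icc (k + 1) n → ℝ) :=
  (LinearMap.funLeft ℝ ℝ Subtype.val).prod (LinearMap.pi fun m => vertexSum n m.1)

theorem ker_V3constraints : LinearMap.ker (V3constraints n k) = V3sub n k := by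
  ext w
  simp [V3constraints, LinearMap.ker_prod, mem_V3sub, funext_iff, LinearMap.funLeft_apply]

theorem choose_two_sub_le_finrank_V3sub (h : k ≤ n) :
    (n - k).choose 2 - (n - k) ≤ finrank ℝ (V3sub n k) := by
  have hrank := LinearMap.finrank_range_add_finrank_ker (V3constraints n k)
  have hrange := Submodule.finrank_le (LinearMap.range (V3constraints n k))
  have hinner : Fintype.card {g : edgesN n // g.1 ⊆ Icc (k + 1) n} = (n - k).choose 2 := by
    rw [card_edgesN_subset (Icc_subset_Icc_left (by omega)), Nat.card_Icc, Nat.add_sub_add_right]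
  have hle := Fintype.card_subtype_le fun g : edgesN n => g.1 ⊆ Icc (k + 1) n
  rw [ker_V3constraints, finrank_fintype_fun_eq_card, card_edgesN] at hrank
  rw [finrank_prod, finrank_fintype_fun_eq_card, finrank_fintype_fun_eq_card,
    Fintype.card_subtype_compl, hinner, card_edgesN, Fintype.card_coe, Nat.card_Icc] at hrange
  rw [hinner, card_edgesN] at hle
  omega

theorem finrank_iSup_Vfam : finrank ℝ ↥(⨆ i, Vfam n k i) = ∑ i, finrank ℝ (Vfam n k i) :=
  finrank_iSup_eq_sum_of_iSupIndep <| iSupIndep_of_pairwise_dotProduct_eq_zero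
    fun _ _ hij _ hv _ hw => Vfam_orthogonal hij hv hw

theorem sum_finrank_Vfam (h : k + 3 ≤ n) :
    ∑ i, finrank ℝ (Vfam n k i) = k.choose 2 + k + 1 + k * (n - k - 1) + (n - k - 1) +
      finrank ℝ (V3sub n k) := by
  simp only [Fintype.sum_sum_type, finrank_Vfam_inl (n := n) (k := k) (by omega),
    finrank_Vfam_rowSumVec (n := n) (k := k) (by omega), finrank_Vfam_outerVec h,
    finrank_Vfam_Phi2 (n := n) (k := k) (by omega), finrank_Vfam_Phi2' h, sum_const, card_univ,
    smul_eq_mul, mul_one, Fintype.card_coe, Nat.card_Icc, Nat.add_sub_cancel, Fintype.card_unit,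
    one_mul, add_assoc]
  rw [← Fintype.card_coe, card_edgesN]
  rfl

theorem choose_two_add_sub_eq (h : k < n) :
    n.choose 2 + (n - k) =
      k.choose 2 + k + 1 + k * (n - k - 1) + (n - k - 1) + (n - k).choose 2 := by
  have hchoose := Nat.add_choose_two k (n - k)
  rw [Nat.add_sub_cancel' h.le] at hchoose
  have hmul : k * (n - k - 1) + k = k * (n - k) := by
    rw [Nat.mul_sub_one, Nat.sub_add_cancel (Nat.le_mul_of_pos_right _ (by omega))]
  omega

theorem finrank_V3sub_add_le (h : k + 3 ≤ n) :
    finrank ℝ (V3sub n k) + (n - k) ≤ (n - k).choose 2 := by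
  have hle := Submodule.finrank_le (⨆ i, Vfam n k i)
  rw [finrank_iSup_Vfam, sum_finrank_Vfam h, finrank_fintype_fun_eq_card, card_edgesN] at hle
  have := choose_two_add_sub_eq (n := n) (k := k) (by omega)
  omega

theorem finrank_V3sub (h : k + 3 ≤ n) :
    finrank ℝ (V3sub n k) = (n - k).choose 2 - (n - k) := by
  have := finrank_V3sub_add_le h
  have := choose_two_sub_le_finrank_V3sub (n := n) (k := k) (by omega)
  omega

theorem iSup_Vfam_eq_top (h : k + 3 ≤ n) : ⨆ i, Vfam n k i = ⊤ := by
  refine Submodule.eq_top_of_finrank_eq ?_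
  rw [finrank_iSup_Vfam, sum_finrank_Vfam h, finrank_V3sub h, finrank_fintype_fun_eq_card,
    card_edgesN]
  have := choose_two_add_sub_eq (n := n) (k := k) (by omega)
  have := finrank_V3sub_add_le h
  omega

end Dimension

/-- **Proposition 4.1 (decomposition of `ℝ^E` into `S_{n-k}`-invariant subspaces):**
for `n ≥ k+4` the subspaces are pairwise orthogonal, `S_{n-k}`-invariant, they span all
of `ℝ^E`, and their dimensions are `1`, `1`, `1`, `n−k−1`, `n−k−1` and `C(n−k,2)−(n−k)`. -/
theorem Vfam_decomposition (k n : ℕ) (hn : k + 4 ≤ n) :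
    (∀ i j : DecompIdx k, i ≠ j →
      ∀ v ∈ Vfam n k i, ∀ w ∈ Vfam n k j, ∑ g, v g * w g = 0)
    ∧ (∀ σ : Equiv.Perm ℕ, FixPerm n k σ → ∀ i : DecompIdx k, ∀ w ∈ Vfam n k i,
        (fun g => w (permEdge n σ g)) ∈ Vfam n k i)
    ∧ iSup (Vfam n k) = ⊤
    ∧ (∀ e : ↥(edgesN k), Module.finrank ℝ ↥(Vfam n k (.inl e)) = 1)
    ∧ (∀ j : ↥(Finset.Icc 1 k), Module.finrank ℝ ↥(Vfam n k (.inr (.inl j))) = 1)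
    ∧ Module.finrank ℝ ↥(Vfam n k (.inr (.inr (.inl ())))) = 1
    ∧ (∀ j : ↥(Finset.Icc 1 k),
        Module.finrank ℝ ↥(Vfam n k (.inr (.inr (.inr (.inl j))))) = n - k - 1)
    ∧ Module.finrank ℝ ↥(Vfam n k (.inr (.inr (.inr (.inr (.inl ())))))) = n - k - 1
    ∧ Module.finrank ℝ ↥(Vfam n k (.inr (.inr (.inr (.inr (.inr ()))))))
        = Nat.choose (n - k) 2 - (n - k) :=
  ⟨fun _ _ hij _ hv _ hw => Vfam_orthogonal hij hv hw,
    fun _ hσ i _ hw => Vfam_invariant hσ i hw,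
    iSup_Vfam_eq_top (by omega),
    finrank_Vfam_inl (by omega),
    finrank_Vfam_rowSumVec (by omega),
    finrank_Vfam_outerVec (by omega) (),
    finrank_Vfam_Phi2 (by omega),
    finrank_Vfam_Phi2' (by omega) (),
    finrank_V3sub (by omega)⟩
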